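/- For s ∈ {1,…,5}, let [f]^s denote the elementary symmetric polynomial of degree s in the five real variables f₁,…,f₅, and define f_out(f₁,…,f₅) = ([f]³ − 2[f]⁵)/(3 + [f]⁴). Then f_out is monotone nondecreasing in each variable on the cube [0,1]⁵: if (f₁,…,f₅) and (g₁,…,g₅) lie in [0,1]⁵ with fᵢ ≤ gᵢ for every i, then f_out(f₁,…,f₅) ≤ f_out(g₁,…,g₅). -/

import Mathlib

/-!
`fOut` depends only on the multiset of its five inputs, and as a function of one input `t`, the
other four forming a multiset `s`, it is the Möbius map
`t ↦ (e₃ + (e₂ - 2e₄) t) / (3 + e₄ + e₃ t)` with `eₖ = eₖ(s)`. Such a map is nondecreasing when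
its determinant `(e₂ - 2e₄)(3 + e₄) - e₃²` is nonnegative. That determinant is concave in each
element of `s` (the leading coefficient is `e₁e₃ - e₂² - 2e₃²` of the other three, and
`e₁e₃ ≤ e₂²` for nonnegative reals), so on `[0,1]⁴` its minimum is attained at a vertex, where
it is `0, 0, 3, 8` or `0` according to the number of ones. Monotonicity in each coordinate
then gives monotonicity on the cube, changing one coordinate at a time.
-/

/-- The elementary symmetric polynomial of degree `s` in five variables. -/
noncomputable def esym5 (s : ℕ) (f : Fin 5 → ℝ) : ℝ :=
  ∑ S ∈ Finset.univ.powersetCard s, ∏ i ∈ S, f i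

/-- Output fidelity parameter of the five-qubit-code distillation procedure. -/
noncomputable def fOut (f : Fin 5 → ℝ) : ℝ :=
  (esym5 3 f - 2 * esym5 5 f) / (3 + esym5 4 f)

open Multiset

theorem monotoneOn_univ_pi_of_update {ι α β : Type*} [Fintype ι] [DecidableEq ι]
    [Preorder α] [Preorder β] {S : Set α} {F : (ι → α) → β}
    (hF : ∀ x ∈ Set.univ.pi (fun _ ↦ S), ∀ i, ∀ t ∈ S, x i ≤ t → F x ≤ F (Function.update x i t)) :
    MonotoneOn F (Set.univ.pi fun _ ↦ S) := by
  intro f hf g hg hfg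
  suffices ∀ s : Finset ι, F f ≤ F (s.piecewise g f) by simpa using this Finset.univ
  intro s
  induction s using Finset.induction_on with
  | empty => simp
  | insert j s hj ih =>
    rw [Finset.piecewise_insert]
    refine ih.trans (hF _ (Finset.piecewise_mem_set_pi s hg hf) j _ (hg j (Set.mem_univ j)) ?_)
    rw [Finset.piecewise_eq_of_notMem s g f hj]
    exact hfg j

theorem div_add_mul_le_div_add_mul {𝕜 : Type*} [Field 𝕜] [LinearOrder 𝕜] [IsStrictOrderedRing 𝕜]
    {A B C D x y : 𝕜} (hx : 0 < C + D * x) (hy : 0 < C + D * y) (hxy : x ≤ y)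
    (hdet : A * D ≤ B * C) :
    (A + B * x) / (C + D * x) ≤ (A + B * y) / (C + D * y) := by
  rw [div_le_div_iff₀ hx hy]
  nlinarith [mul_nonneg (sub_nonneg.2 hxy) (sub_nonneg.2 hdet)]

namespace Multiset

section CommSemiring

variable {R : Type*} [CommSemiring R]

@[simp]
theorem esymm_zero_right (s : Multiset R) : s.esymm 0 = 1 := by
  simp [esymm]

@[simp]
theorem esymm_zero_left_succ (n : ℕ) : (0 : Multiset R).esymm (n + 1) = 0 := by
  simp [esymm, powersetCard_zero_right]

@[simp]
theorem esymm_cons (a : R) (s : Multiset R) (n : ℕ) :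
    (a ::ₘ s).esymm (n + 1) = s.esymm (n + 1) + a * s.esymm n := by
  simp [esymm, powersetCard_cons, map_map, sum_map_mul_left]

theorem esymm_eq_zero_of_card_lt {s : Multiset R} {n : ℕ} (h : card s < n) : s.esymm n = 0 := by
  simp [esymm, powersetCard_eq_empty n h]

theorem esymm_nonneg [PartialOrder R] [IsOrderedRing R] {s : Multiset R} (hs : ∀ a ∈ s, 0 ≤ a)
    (n : ℕ) : 0 ≤ s.esymm n :=
  sum_nonneg fun _ hx ↦ by
    obtain ⟨t, ht, rfl⟩ := mem_map.1 hx
    exact prod_nonneg fun a ha ↦ hs a (mem_of_le (mem_powersetCard.1 ht).1 ha)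

end CommSemiring

theorem esymm_one_mul_esymm_three_le_sq {w : Multiset ℝ} (hw : card w = 3)
    (hw0 : ∀ a ∈ w, 0 ≤ a) : w.esymm 1 * w.esymm 3 ≤ w.esymm 2 ^ 2 := by
  obtain ⟨x, y, z, rfl⟩ := card_eq_three.1 hw
  have hx := hw0 x (by simp)
  have hy := hw0 y (by simp)
  have hz := hw0 z (by simp)
  simp only [insert_eq_cons, ← cons_zero, esymm_cons, esymm_zero_right, esymm_zero_left_succ]
  nlinarith [mul_nonneg (mul_nonneg hx hy) (mul_nonneg hy hz),
    mul_nonneg (mul_nonneg hx hy) (mul_nonneg hx hz), mul_nonneg (mul_nonneg hx hz) (mul_nonneg hy hz),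
    sq_nonneg (x * y), sq_nonneg (y * z), sq_nonneg (x * z)]

end Multiset

noncomputable def fOutMultiset (s : Multiset ℝ) : ℝ :=
  (s.esymm 3 - 2 * s.esymm 5) / (3 + s.esymm 4)

theorem fOut_eq_fOutMultiset (f : Fin 5 → ℝ) : fOut f = fOutMultiset (Finset.univ.val.map f) := by
  simp only [fOut, fOutMultiset, esym5, Finset.esymm_map_val]

theorem fOutMultiset_cons (t : ℝ) {s : Multiset ℝ} (hs : card s = 4) :
    fOutMultiset (t ::ₘ s) =
      (s.esymm 3 + (s.esymm 2 - 2 * s.esymm 4) * t) / (3 + s.esymm 4 + s.esymm 3 * t) := by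
  rw [fOutMultiset, esymm_cons, esymm_cons, esymm_cons,
    esymm_eq_zero_of_card_lt (n := 5) (by omega)]
  ring_nf

/-- The determinant of the Möbius map `t ↦ fOutMultiset (t ::ₘ s)` of `fOutMultiset_cons`. -/
noncomputable def fOutDet (s : Multiset ℝ) : ℝ :=
  (s.esymm 2 - 2 * s.esymm 4) * (3 + s.esymm 4) - s.esymm 3 * s.esymm 3

theorem fOutDet_cons_concave {w : Multiset ℝ} (hw : card w = 3) (hw0 : ∀ a ∈ w, 0 ≤ a)
    {t : ℝ} (ht : t ∈ Set.Icc 0 1) :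
    (1 - t) * fOutDet (0 ::ₘ w) + t * fOutDet (1 ::ₘ w) ≤ fOutDet (t ::ₘ w) := by
  have hnewton := esymm_one_mul_esymm_three_le_sq hw hw0
  have he3 := esymm_nonneg hw0 3
  simp only [fOutDet, esymm_cons, esymm_eq_zero_of_card_lt (show card w < 4 by omega)]
  nlinarith [mul_nonneg (mul_nonneg ht.1 (sub_nonneg.2 ht.2)) (sub_nonneg.2 hnewton),
    mul_nonneg (mul_nonneg ht.1 (sub_nonneg.2 ht.2)) (mul_nonneg he3 he3)]

theorem fOutDet_nonneg_of_mem_zero_one {v : Multiset ℝ} (hv : card v = 4)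
    (h01 : ∀ a ∈ v, a = 0 ∨ a = 1) : 0 ≤ fOutDet v := by
  obtain ⟨a, b, c, d, rfl⟩ := card_eq_four.1 hv
  simp only [insert_eq_cons, mem_cons, mem_singleton] at h01
  rcases h01 a (by simp) with rfl | rfl <;> rcases h01 b (by simp) with rfl | rfl <;>
    rcases h01 c (by simp) with rfl | rfl <;> rcases h01 d (by simp) with rfl | rfl <;>
    norm_num [fOutDet, insert_eq_cons, ← cons_zero]

-- `u` holds the coordinates still free in `[0,1]`, `v` those already moved to a vertex.
theorem fOutDet_add_nonneg {u v : Multiset ℝ} (hu : ∀ a ∈ u, a ∈ Set.Icc 0 1)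
    (hv : ∀ a ∈ v, a = 0 ∨ a = 1) (hcard : card (u + v) = 4) : 0 ≤ fOutDet (u + v) := by
  induction u using Multiset.induction_on generalizing v with
  | empty =>
    rw [zero_add] at hcard ⊢
    exact fOutDet_nonneg_of_mem_zero_one hcard hv
  | cons t u ih =>
    have ht := hu t (mem_cons_self t u)
    have hu' : ∀ a ∈ u, a ∈ Set.Icc 0 1 := fun a ha ↦ hu a (mem_cons_of_mem ha)
    have hvertex (e : ℝ) (he : e = 0 ∨ e = 1) : 0 ≤ fOutDet (e ::ₘ (u + v)) := by
      rw [← add_cons]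
      exact ih hu' (by simpa [he] using hv) (by simpa using hcard)
    have hw0 : ∀ a ∈ u + v, 0 ≤ a := by
      intro a ha
      rcases mem_add.1 ha with ha | ha
      · exact (hu' a ha).1
      · rcases hv a ha with rfl | rfl <;> norm_num
    rw [cons_add] at hcard ⊢
    have h0 := hvertex 0 (Or.inl rfl)
    have h1 := hvertex 1 (Or.inr rfl)
    refine le_trans ?_ (fOutDet_cons_concave (by simpa using hcard) hw0 ht)
    nlinarith [ht.1, ht.2]

theorem fOutDet_nonneg {s : Multiset ℝ} (hs : card s = 4) (h01 : ∀ a ∈ s, a ∈ Set.Icc 0 1) :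
    0 ≤ fOutDet s := by
  simpa using fOutDet_add_nonneg (v := 0) h01 (by simp) (by simpa using hs)

theorem fOutMultiset_cons_le {s : Multiset ℝ} (hs : card s = 4) (h01 : ∀ a ∈ s, a ∈ Set.Icc 0 1)
    {x y : ℝ} (hx : 0 ≤ x) (hxy : x ≤ y) : fOutMultiset (x ::ₘ s) ≤ fOutMultiset (y ::ₘ s) := by
  have hs0 : ∀ a ∈ s, 0 ≤ a := fun a ha ↦ (h01 a ha).1
  have h3 := esymm_nonneg hs0 3
  have h4 := esymm_nonneg hs0 4
  rw [fOutMultiset_cons x hs, fOutMultiset_cons y hs]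
  exact div_add_mul_le_div_add_mul (by positivity) (by nlinarith) hxy
    (sub_nonneg.1 (fOutDet_nonneg hs h01))

theorem fOut_le_fOut_update {x : Fin 5 → ℝ} (hx : x ∈ Set.univ.pi fun _ ↦ Set.Icc (0 : ℝ) 1)
    (i : Fin 5) {t : ℝ} (hxt : x i ≤ t) : fOut x ≤ fOut (Function.update x i t) := by
  have hsplit (f : Fin 5 → ℝ) :
      Finset.univ.val.map f = f i ::ₘ (Finset.univ.erase i).val.map f := by
    rw [Finset.erase_val, ← map_cons, cons_erase (Finset.mem_univ i)]
  have hrest : (Finset.univ.erase i).val.map (Function.update x i t) =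
      (Finset.univ.erase i).val.map x :=
    map_congr rfl fun j hj ↦
      Function.update_of_ne (Finset.ne_of_mem_erase (Finset.mem_def.2 hj)) t x
  rw [fOut_eq_fOutMultiset, fOut_eq_fOutMultiset, hsplit x, hsplit, hrest, Function.update_self]
  refine fOutMultiset_cons_le (by simp) ?_ (hx i (Set.mem_univ i)).1 hxt
  intro a ha
  obtain ⟨j, -, rfl⟩ := mem_map.1 ha
  exact hx j (Set.mem_univ j)

/-- `fOut` is monotone nondecreasing in each variable on the cube `[0,1]⁵`. -/
theorem stmt_6 (f g : Fin 5 → ℝ)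
    (hf : ∀ i, f i ∈ Set.Icc (0 : ℝ) 1) (hg : ∀ i, g i ∈ Set.Icc (0 : ℝ) 1)
    (hfg : ∀ i, f i ≤ g i) :
    fOut f ≤ fOut g :=
  monotoneOn_univ_pi_of_update (fun _ hx i _ _ hxt ↦ fOut_le_fOut_update hx i hxt)
    (fun i _ ↦ hf i) (fun i _ ↦ hg i) hfg
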